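/- Let 0 < α ≤ 1, let s and t be positive integers with √t > α, and let x, x̂ ∈ ℝⁿ satisfy ‖x̂‖₁ − α‖x̂‖₂ ≤ ‖x‖₁ − α‖x‖₂. Set h = x̂ − x, let T₀ be the support of h_max(s), let T₁ be the index set of the t largest-magnitude entries of h_{-max(s)}, and T₀₁ = T₀ ∪ T₁. Suppose A ∈ ℝ^{m×n} has (ℓ₂,ℓ₁)-RIP constants satisfying (1 − δ_{t+s}^{lb})‖v‖₂ ≤ ‖Av‖₁ for all (t+s)-sparse v and ‖Av‖₁ ≤ (1 + δ_t^{ub})‖v‖₂ for all t-sparse v. Then ‖Ah‖₁ ≥ ρ_t ‖h_{T₀₁}‖₂ − 2(1 + δ_t^{ub})‖x_{-max(s)}‖₁/(√t − α), where ρ_t = 1 − δ_{t+s}^{lb} − (1 + δ_t^{ub})/a(s,t;α) and a(s,t;α) = (√t − α)/(√s + α). -/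

import Mathlib

/-! The condition `‖x̂‖₁ − α‖x̂‖₂ ≤ ‖x‖₁ − α‖x‖₂` and the triangle inequality bound the `ℓ₁` mass
`L` of `h` off its `s` largest entries by `√s ‖h_{T₀₁}‖₂ + 2‖x_{-max(s)}‖₁ + α‖h‖₂`. Every entry
outside `T₀₁` is at most the average `‖h_{T₁}‖₁ / t`, so the tail `h_{T₀₁ᶜ}` has `ℓ₂` norm at most
`L / √t`; as `α < √t` this gives `L / √t ≤ ((√s + α)‖h_{T₀₁}‖₂ + 2‖x_{-max(s)}‖₁) / (√t − α)`.
Shelling the tail into blocks of `t` entries of decreasing magnitude, the upper RIP bound gives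
`‖A h_{T₀₁ᶜ}‖₁ ≤ (1 + δ_t^{ub}) L / √t`, and the lower RIP bound applied to `h_{T₀₁}`, together with
`‖A h_{T₀₁}‖₁ ≤ ‖A h‖₁ + ‖A h_{T₀₁ᶜ}‖₁`, gives the claim. -/

open Finset

/-- The ℓ₁ norm of a vector in `ℝⁿ`. -/
noncomputable def l1norm {n : ℕ} (x : Fin n → ℝ) : ℝ := ∑ i, |x i|

/-- The ℓ₂ norm of a vector in `ℝⁿ`. -/
noncomputable def l2norm {n : ℕ} (x : Fin n → ℝ) : ℝ := Real.sqrt (∑ i, (x i) ^ 2)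

/-- The restriction `x_S` of a vector `x` to an index set `S` (equal to `x` on `S`, zero
outside `S`). -/
def restr {n : ℕ} (x : Fin n → ℝ) (S : Finset (Fin n)) : Fin n → ℝ :=
  fun i => if i ∈ S then x i else 0

/-- `T` is an index set of the `s` largest-magnitude entries of `x` among the indices in `S`. -/
def IsMaxIdxOn {n : ℕ} (x : Fin n → ℝ) (s : ℕ) (T S : Finset (Fin n)) : Prop :=
  T ⊆ S ∧ T.card = s ∧ ∀ i ∈ T, ∀ j ∈ S \ T, |x j| ≤ |x i|

/-- `T` is an index set of the `s` largest-magnitude entries of `x`. -/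
def IsMaxIdx {n : ℕ} (x : Fin n → ℝ) (s : ℕ) (T : Finset (Fin n)) : Prop :=
  IsMaxIdxOn x s T Finset.univ

/-- A vector is `r`-sparse: it has at most `r` nonzero entries. -/
def Sparse {n : ℕ} (r : ℕ) (v : Fin n → ℝ) : Prop :=
  ∃ S : Finset (Fin n), S.card ≤ r ∧ ∀ i ∉ S, v i = 0

open scoped Matrix

lemma Finset.sum_le_sum_of_card_le_of_forall_le {ι M : Type*} [AddCommMonoid M] [LinearOrder M]
    [AddLeftMono M] {f : ι → M} {B C : Finset ι} (hC : ∀ i ∈ C, 0 ≤ f i) (hBC : #B ≤ #C)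
    (hf : ∀ j ∈ B, ∀ i ∈ C, f j ≤ f i) : ∑ j ∈ B, f j ≤ ∑ i ∈ C, f i := by
  obtain rfl | ⟨j, hj⟩ := B.eq_empty_or_nonempty
  · simpa using sum_nonneg hC
  have hCne : C.Nonempty := card_pos.mp ((card_pos.mpr ⟨j, hj⟩).trans_le hBC)
  obtain ⟨i₀, hi₀, hmin⟩ := C.exists_min_image f hCne
  calc ∑ j ∈ B, f j ≤ #B • f i₀ := sum_le_card_nsmul _ _ _ fun j hj => hf j hj i₀ hi₀
    _ ≤ #C • f i₀ := nsmul_le_nsmul_left (hC i₀ hi₀) hBC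
    _ ≤ ∑ i ∈ C, f i := card_nsmul_le_sum _ _ _ hmin

section Norms

variable {n : ℕ}

lemma l1norm_nonneg (x : Fin n → ℝ) : 0 ≤ l1norm x :=
  sum_nonneg fun _ _ => abs_nonneg _

lemma l1norm_restr (x : Fin n → ℝ) (S : Finset (Fin n)) :
    l1norm (restr x S) = ∑ i ∈ S, |x i| := by
  simp only [l1norm, restr, apply_ite abs, abs_zero, sum_ite_mem, univ_inter]

lemma l2norm_restr (x : Fin n → ℝ) (S : Finset (Fin n)) :
    l2norm (restr x S) = √(∑ i ∈ S, x i ^ 2) := by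
  simp only [l2norm, restr, apply_ite (· ^ 2), ne_eq, OfNat.ofNat_ne_zero, not_false_eq_true,
    zero_pow, sum_ite_mem, univ_inter]

lemma l2norm_eq_norm (x : Fin n → ℝ) : l2norm x = ‖WithLp.toLp 2 x‖ := by
  simp [l2norm, EuclideanSpace.norm_eq]

lemma l2norm_add_le (x y : Fin n → ℝ) : l2norm (x + y) ≤ l2norm x + l2norm y := by
  simpa only [l2norm_eq_norm, WithLp.toLp_add] using norm_add_le _ _

lemma l1norm_add_le (x y : Fin n → ℝ) : l1norm (x + y) ≤ l1norm x + l1norm y := by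
  simpa only [l1norm, Pi.add_apply, ← sum_add_distrib] using
    sum_le_sum fun i _ => abs_add_le (x i) (y i)

lemma l1norm_sub_le (x y : Fin n → ℝ) : l1norm (x - y) ≤ l1norm x + l1norm y := by
  simpa only [l1norm, Pi.sub_apply, ← sum_add_distrib] using
    sum_le_sum fun i _ => abs_sub (x i) (y i)

lemma l1norm_eq_restr_add_restr_compl (x : Fin n → ℝ) (S : Finset (Fin n)) :
    l1norm x = l1norm (restr x S) + l1norm (restr x Sᶜ) := by
  rw [l1norm_restr, l1norm_restr, sum_add_sum_compl, l1norm]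

lemma restr_add_restr_compl (x : Fin n → ℝ) (S : Finset (Fin n)) :
    restr x S + restr x Sᶜ = x := by
  ext i; by_cases hi : i ∈ S <;> simp [restr, hi]

lemma restr_add_restr_sdiff (x : Fin n → ℝ) {T R : Finset (Fin n)} (hTR : T ⊆ R) :
    restr x T + restr x (R \ T) = restr x R := by
  ext i
  by_cases hiT : i ∈ T
  · simp [restr, hiT, hTR hiT]
  · by_cases hiR : i ∈ R <;> simp [restr, hiT, hiR]

lemma sparse_restr (x : Fin n → ℝ) {S : Finset (Fin n)} {r : ℕ} (hS : #S ≤ r) :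
    Sparse r (restr x S) :=
  ⟨S, hS, fun _ hi => if_neg hi⟩

lemma l2norm_restr_mono (x : Fin n → ℝ) {S T : Finset (Fin n)} (hST : S ⊆ T) :
    l2norm (restr x S) ≤ l2norm (restr x T) := by
  rw [l2norm_restr, l2norm_restr]
  exact Real.sqrt_le_sqrt (sum_le_sum_of_subset_of_nonneg hST fun i _ _ => sq_nonneg _)

lemma l1norm_restr_le_sqrt_card_mul_l2norm (x : Fin n → ℝ) (S : Finset (Fin n)) :
    l1norm (restr x S) ≤ √(#S) * l2norm (restr x S) := by
  rw [l1norm_restr, l2norm_restr, ← Real.sqrt_mul (Nat.cast_nonneg _)]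
  refine Real.le_sqrt_of_sq_le ?_
  simpa only [sq_abs] using sq_sum_le_card_mul_sum_sq (s := S) (f := fun i => |x i|)

lemma l2norm_restr_le_of_abs_le (x : Fin n → ℝ) {S : Finset (Fin n)} {b : ℝ} (hb : 0 ≤ b)
    (hS : ∀ i ∈ S, |x i| ≤ b) : l2norm (restr x S) ≤ √(#S) * b := by
  rw [l2norm_restr, ← Real.sqrt_sq hb, ← Real.sqrt_mul (Nat.cast_nonneg _)]
  refine Real.sqrt_le_sqrt ?_
  calc ∑ i ∈ S, x i ^ 2 ≤ ∑ _i ∈ S, b ^ 2 :=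
        sum_le_sum fun i hi => by
          simpa only [sq_abs] using pow_le_pow_left₀ (abs_nonneg _) (hS i hi) 2
    _ = #S * b ^ 2 := by rw [sum_const, nsmul_eq_mul]

lemma sum_sq_le_mul_sum_abs (x : Fin n → ℝ) {S : Finset (Fin n)} {b : ℝ}
    (hS : ∀ i ∈ S, |x i| ≤ b) : ∑ i ∈ S, x i ^ 2 ≤ b * ∑ i ∈ S, |x i| := by
  rw [mul_sum]
  exact sum_le_sum fun i hi => by
    rw [← sq_abs, sq]; exact mul_le_mul_of_nonneg_right (hS i hi) (abs_nonneg _)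

end Norms

lemma exists_isMaxIdxOn {n : ℕ} (x : Fin n → ℝ) {k : ℕ} {S : Finset (Fin n)} (hk : k ≤ #S) :
    ∃ T, IsMaxIdxOn x k T S := by
  induction k generalizing S with
  | zero => exact ⟨∅, empty_subset S, rfl, by simp⟩
  | succ k ih =>
    obtain ⟨i₀, hi₀, hmax⟩ := S.exists_max_image (fun i => |x i|) (card_pos.mp (by omega))
    obtain ⟨T, hTS, hTcard, hT⟩ := ih (S := S.erase i₀) (by rw [card_erase_of_mem hi₀]; omega)
    have hi₀T : i₀ ∉ T := fun hi => (mem_erase.mp (hTS hi)).1 rfl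
    refine ⟨insert i₀ T, insert_subset hi₀ (hTS.trans (erase_subset _ _)),
      by rw [card_insert_of_notMem hi₀T, hTcard], fun i hi j hj => ?_⟩
    obtain ⟨hjS, hjT⟩ := mem_sdiff.mp hj
    rcases mem_insert.mp hi with rfl | hi
    · exact hmax j hjS
    · exact hT i hi j (mem_sdiff.mpr ⟨mem_erase.mpr ⟨fun h => hjT (h ▸ mem_insert_self _ _), hjS⟩,
        fun h => hjT (mem_insert_of_mem h)⟩)

section MaxIdx

variable {n : ℕ} {x : Fin n → ℝ} {k : ℕ} {T S : Finset (Fin n)}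

lemma IsMaxIdxOn.of_restr (hT : IsMaxIdxOn (restr x S) k T S) : IsMaxIdxOn x k T S := by
  obtain ⟨hTS, hcard, hmax⟩ := hT
  refine ⟨hTS, hcard, fun i hi j hj => ?_⟩
  simpa only [restr, if_pos (hTS hi), if_pos (mem_sdiff.mp hj).1] using hmax i hi j hj

lemma IsMaxIdxOn.mul_abs_le_sum (hT : IsMaxIdxOn x k T S) {j : Fin n} (hj : j ∈ S \ T) :
    k * |x j| ≤ ∑ i ∈ T, |x i| := by
  obtain ⟨-, hcard, hmax⟩ := hT
  calc (k : ℝ) * |x j| = ∑ _i ∈ T, |x j| := by rw [sum_const, hcard, nsmul_eq_mul]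
    _ ≤ ∑ i ∈ T, |x i| := sum_le_sum fun i hi => hmax i hi j hj

lemma IsMaxIdxOn.abs_le_of_mem_sdiff (hT : IsMaxIdxOn x k T S) (hk : 0 < k) {j : Fin n}
    (hj : j ∈ S \ T) : |x j| ≤ (∑ i ∈ T, |x i|) / k :=
  (le_div_iff₀' (by exact_mod_cast hk)).mpr (hT.mul_abs_le_sum hj)

lemma IsMaxIdx.l1norm_restr_le (hT : IsMaxIdx x k T) {R : Finset (Fin n)} (hR : #R ≤ k) :
    l1norm (restr x R) ≤ l1norm (restr x T) := by
  obtain ⟨-, hcard, hmax⟩ := hT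
  have hcard' : #(R \ T) ≤ #(T \ R) := by
    rw [card_sdiff, card_sdiff, inter_comm]
    omega
  have hsdiff : ∑ i ∈ R \ T, |x i| ≤ ∑ i ∈ T \ R, |x i| :=
    sum_le_sum_of_card_le_of_forall_le (fun _ _ => abs_nonneg _) hcard' fun j hj i hi =>
      hmax i (mem_sdiff.mp hi).1 j (mem_sdiff.mpr ⟨mem_univ j, (mem_sdiff.mp hj).2⟩)
  rw [l1norm_restr, l1norm_restr, ← sum_sdiff (inter_subset_left (s₁ := R) (s₂ := T)),
    ← sum_sdiff (inter_subset_right (s₁ := R) (s₂ := T)), sdiff_inter_self_left,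
    sdiff_inter_self_right]
  linarith

end MaxIdx

section Shelling

variable {n m t : ℕ} {A : Matrix (Fin m) (Fin n) ℝ} {c : ℝ}

lemma sqrt_mul_div_eq_div_sqrt (t : ℕ) (a : ℝ) : √t * (a / t) = a / √t := by
  rcases (Nat.cast_nonneg (α := ℝ) t).eq_or_lt with ht | ht
  · simp [← ht]
  · rw [mul_div_assoc', div_eq_div_iff (by positivity) (by positivity)]
    linear_combination a * Real.mul_self_sqrt ht.le

lemma l1norm_mulVec_restr_le_of_card_le (hc : 0 ≤ c)
    (hA : ∀ v, Sparse t v → l1norm (A *ᵥ v) ≤ c * l2norm v) (x : Fin n → ℝ) {T : Finset (Fin n)}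
    (hT : #T ≤ t) {b : ℝ} (hb : 0 ≤ b) (hTb : ∀ i ∈ T, |x i| ≤ b) :
    l1norm (A *ᵥ restr x T) ≤ c * (√t * b) :=
  (hA _ (sparse_restr x hT)).trans <| mul_le_mul_of_nonneg_left
    ((l2norm_restr_le_of_abs_le x hb hTb).trans <|
      mul_le_mul_of_nonneg_right (Real.sqrt_le_sqrt (by exact_mod_cast hT)) hb) hc

/-- Peel off the `t` largest entries of `x_R`: the remaining entries are bounded by the average of
the peeled ones, which serves as the bound `b` for the rest. -/
lemma l1norm_mulVec_restr_le (ht : 0 < t) (hc : 0 ≤ c)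
    (hA : ∀ v, Sparse t v → l1norm (A *ᵥ v) ≤ c * l2norm v) (x : Fin n → ℝ) (R : Finset (Fin n))
    {b : ℝ} (hb : 0 ≤ b) (hR : ∀ i ∈ R, |x i| ≤ b) :
    l1norm (A *ᵥ restr x R) ≤ c * (√t * b + l1norm (restr x R) / √t) := by
  induction R using Finset.strongInduction generalizing b with
  | H R ih =>
  by_cases hRt : #R ≤ t
  · refine (l1norm_mulVec_restr_le_of_card_le hc hA x hRt hb hR).trans
      (mul_le_mul_of_nonneg_left ?_ hc)
    have : 0 ≤ l1norm (restr x R) / √t := div_nonneg (l1norm_nonneg _) (Real.sqrt_nonneg _)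
    linarith
  obtain ⟨T, hT⟩ := exists_isMaxIdxOn x (show t ≤ #R by omega)
  obtain ⟨hTR, hTcard, -⟩ := id hT
  have hhead := l1norm_mulVec_restr_le_of_card_le hc hA x hTcard.le hb fun i hi => hR i (hTR hi)
  have htail := ih (R \ T) (sdiff_ssubset hTR (card_pos.mp (hTcard ▸ ht)))
    (div_nonneg (sum_nonneg fun _ _ => abs_nonneg _) (Nat.cast_nonneg t))
    fun j hj => hT.abs_le_of_mem_sdiff ht hj
  calc l1norm (A *ᵥ restr x R)
      ≤ l1norm (A *ᵥ restr x T) + l1norm (A *ᵥ restr x (R \ T)) := by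
        rw [← restr_add_restr_sdiff x hTR, Matrix.mulVec_add]; exact l1norm_add_le _ _
    _ ≤ c * (√t * b) + c * (√t * ((∑ i ∈ T, |x i|) / t) + l1norm (restr x (R \ T)) / √t) :=
        add_le_add hhead htail
    _ = c * (√t * b + l1norm (restr x R) / √t) := by
        rw [sqrt_mul_div_eq_div_sqrt, l1norm_restr, l1norm_restr, ← sum_sdiff hTR]
        ring

end Shelling

section Tail

variable {n m t : ℕ} {x : Fin n → ℝ} {T S : Finset (Fin n)}

lemma IsMaxIdxOn.l2norm_restr_sdiff_le (hT : IsMaxIdxOn x t T S) (ht : 0 < t) :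
    l2norm (restr x (S \ T)) ≤ l1norm (restr x S) / √t := by
  have htR : (0 : ℝ) < t := by exact_mod_cast ht
  have hsplit := sum_sdiff (f := fun i => |x i|) hT.1
  have hhead : 0 ≤ ∑ i ∈ T, |x i| := sum_nonneg fun _ _ => abs_nonneg _
  have htail : 0 ≤ ∑ i ∈ S \ T, |x i| := sum_nonneg fun _ _ => abs_nonneg _
  rw [l2norm_restr, l1norm_restr, Real.sqrt_le_left (by positivity), div_pow,
    Real.sq_sqrt htR.le, le_div_iff₀ htR]
  calc (∑ i ∈ S \ T, x i ^ 2) * t ≤ (∑ i ∈ T, |x i|) / t * (∑ i ∈ S \ T, |x i|) * t :=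
        mul_le_mul_of_nonneg_right
          (sum_sq_le_mul_sum_abs x fun j hj => hT.abs_le_of_mem_sdiff ht hj) htR.le
    _ = (∑ i ∈ T, |x i|) * (∑ i ∈ S \ T, |x i|) := by field_simp
    _ ≤ (∑ i ∈ S, |x i|) ^ 2 := by nlinarith

lemma IsMaxIdxOn.l1norm_mulVec_restr_sdiff_le (hT : IsMaxIdxOn x t T S) (ht : 0 < t)
    {A : Matrix (Fin m) (Fin n) ℝ} {c : ℝ} (hc : 0 ≤ c)
    (hA : ∀ v, Sparse t v → l1norm (A *ᵥ v) ≤ c * l2norm v) :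
    l1norm (A *ᵥ restr x (S \ T)) ≤ c * (l1norm (restr x S) / √t) := by
  have := l1norm_mulVec_restr_le ht hc hA x (S \ T)
    (div_nonneg (sum_nonneg fun _ _ => abs_nonneg _) (Nat.cast_nonneg t))
    fun j hj => hT.abs_le_of_mem_sdiff ht hj
  rwa [sqrt_mul_div_eq_div_sqrt, l1norm_restr, ← add_div, add_comm, sum_sdiff hT.1,
    ← l1norm_restr] at this

end Tail

lemma l1norm_restr_compl_le_of_l1norm_sub_l2norm_le {n : ℕ} {α : ℝ} (hα : 0 ≤ α)
    {x h : Fin n → ℝ} (hmin : l1norm (x + h) - α * l2norm (x + h) ≤ l1norm x - α * l2norm x)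
    (T : Finset (Fin n)) :
    l1norm (restr h Tᶜ) ≤ l1norm (restr h T) + 2 * l1norm (restr x Tᶜ) + α * l2norm h := by
  have hl1 : l1norm (x + h) ≤ l1norm x + α * l2norm h := by
    have := mul_le_mul_of_nonneg_left (l2norm_add_le x h) hα
    linarith
  have hT : ∑ i ∈ T, (|x i| - |h i|) ≤ ∑ i ∈ T, |x i + h i| := sum_le_sum fun i _ => by
    simpa only [abs_neg, sub_neg_eq_add] using abs_sub_abs_le_abs_sub (x i) (-h i)
  have hTc : ∑ i ∈ Tᶜ, (|h i| - |x i|) ≤ ∑ i ∈ Tᶜ, |x i + h i| := sum_le_sum fun i _ => by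
    simpa only [abs_neg, sub_neg_eq_add, add_comm] using abs_sub_abs_le_abs_sub (h i) (-x i)
  rw [l1norm_eq_restr_add_restr_compl _ T, l1norm_eq_restr_add_restr_compl x T] at hl1
  simp only [l1norm_restr, Pi.add_apply, sum_sub_distrib] at hl1 hT hTc ⊢
  linarith

lemma l1norm_restr_compl_div_sqrt_le {n s t : ℕ} {α : ℝ} (hα : 0 ≤ α) (hαt : α < √t)
    {x h : Fin n → ℝ} (hmin : l1norm (x + h) - α * l2norm (x + h) ≤ l1norm x - α * l2norm x)
    {Th Tx T1 : Finset (Fin n)} (hTh : IsMaxIdx h s Th) (hTx : #Tx ≤ s)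
    (hT1 : IsMaxIdxOn h t T1 Thᶜ) :
    l1norm (restr h Thᶜ) / √t ≤
      ((√s + α) * l2norm (restr h (Th ∪ T1)) + 2 * l1norm (restr x Txᶜ)) / (√t - α) := by
  set L := l1norm (restr h Thᶜ)
  set E := l2norm (restr h (Th ∪ T1))
  have hsqrt : 0 < √t := hα.trans_lt hαt
  have ht : 0 < t := by exact_mod_cast Real.sqrt_pos.mp hsqrt
  have hcone := l1norm_restr_compl_le_of_l1norm_sub_l2norm_le hα hmin Tx
  have hTxTh := hTh.l1norm_restr_le hTx
  have hsplit := (l1norm_eq_restr_add_restr_compl h Th).symm.trans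
    (l1norm_eq_restr_add_restr_compl h Tx)
  have hhead : l1norm (restr h Th) ≤ √s * E := by
    refine (l1norm_restr_le_sqrt_card_mul_l2norm h Th).trans ?_
    rw [hTh.2.1]
    exact mul_le_mul_of_nonneg_left (l2norm_restr_mono h subset_union_left) (Real.sqrt_nonneg _)
  have hl2 : l2norm h ≤ E + L / √t := by
    have htail := hT1.l2norm_restr_sdiff_le ht
    rw [sdiff_eq_inter_compl, ← compl_union] at htail
    calc l2norm h = l2norm (restr h (Th ∪ T1) + restr h (Th ∪ T1)ᶜ) := by
          rw [restr_add_restr_compl]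
      _ ≤ E + L / √t := (l2norm_add_le _ _).trans (add_le_add le_rfl htail)
  rw [le_div_iff₀ (sub_pos.mpr hαt), mul_sub, div_mul_cancel₀ _ hsqrt.ne']
  linarith [mul_le_mul_of_nonneg_left hl2 hα]

theorem stmt4_general {n m : ℕ} (α : ℝ) (hα0 : 0 < α)
    (s t : ℕ) (hαt : α < Real.sqrt t)
    (x xhat : Fin n → ℝ)
    (hmin : l1norm xhat - α * l2norm xhat ≤ l1norm x - α * l2norm x)
    (h : Fin n → ℝ) (hh : h = xhat - x)
    (Th Tx : Finset (Fin n)) (hTh : IsMaxIdx h s Th) (hTx : IsMaxIdx x s Tx)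
    (T1 : Finset (Fin n)) (hT1 : IsMaxIdxOn (restr h Thᶜ) t T1 Thᶜ)
    (A : Matrix (Fin m) (Fin n) ℝ) (δlb δub : ℝ) (hδub : 0 ≤ δub)
    (hRIPlb : ∀ v : Fin n → ℝ, Sparse (t + s) v →
      (1 - δlb) * l2norm v ≤ l1norm (A.mulVec v))
    (hRIPub : ∀ v : Fin n → ℝ, Sparse t v →
      l1norm (A.mulVec v) ≤ (1 + δub) * l2norm v)
    (a ρ : ℝ) (ha : a = (Real.sqrt t - α) / (Real.sqrt s + α))
    (hρ : ρ = 1 - δlb - (1 + δub) / a) :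
    ρ * l2norm (restr h (Th ∪ T1)) -
        2 * (1 + δub) * l1norm (restr x Txᶜ) / (Real.sqrt t - α) ≤
      l1norm (A.mulVec h) := by
  obtain rfl : xhat = x + h := by rw [hh, add_sub_cancel]
  have hT1 := hT1.of_restr
  have ht : 0 < t := by exact_mod_cast Real.sqrt_pos.mp (hα0.trans hαt)
  have hL := l1norm_restr_compl_div_sqrt_le hα0.le hαt hmin hTh hTx.2.1.le hT1
  have htail : l1norm (A *ᵥ restr h (Th ∪ T1)ᶜ) ≤ (1 + δub) * (l1norm (restr h Thᶜ) / √t) := by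
    rw [compl_union, ← sdiff_eq_inter_compl]
    exact hT1.l1norm_mulVec_restr_sdiff_le ht (by linarith) hRIPub
  have hhead : (1 - δlb) * l2norm (restr h (Th ∪ T1)) ≤
      l1norm (A *ᵥ h) + l1norm (A *ᵥ restr h (Th ∪ T1)ᶜ) := by
    refine (hRIPlb _ (sparse_restr h ((card_union_le _ _).trans ?_))).trans ?_
    · rw [hTh.2.1, hT1.2.1, add_comm]
    · rw [eq_sub_of_add_eq (restr_add_restr_compl h (Th ∪ T1)), Matrix.mulVec_sub]
      exact l1norm_sub_le _ _
  have hq : 0 < √t - α := sub_pos.mpr hαt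
  have hp : 0 < √s + α := by positivity
  calc ρ * l2norm (restr h (Th ∪ T1)) - 2 * (1 + δub) * l1norm (restr x Txᶜ) / (√t - α)
      = (1 - δlb) * l2norm (restr h (Th ∪ T1)) - (1 + δub) *
          (((√s + α) * l2norm (restr h (Th ∪ T1)) + 2 * l1norm (restr x Txᶜ)) / (√t - α)) := by
        rw [hρ, ha]
        field_simp
        ring
    _ ≤ l1norm (A *ᵥ h) := by linarith [mul_le_mul_of_nonneg_left hL (by linarith : 0 ≤ 1 + δub)]

/-- lower bound on `‖Ah‖₁`.  Let `0 < α ≤ 1`, `s, t` positive integers with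
`√t > α`, and `x, x̂` with `‖x̂‖₁ − α‖x̂‖₂ ≤ ‖x‖₁ − α‖x‖₂`, `h = x̂ − x`.  Let `Th` be the index
set of the `s` largest-magnitude entries of `h` (so `hₘₐₓ₍ₛ₎ = restr h Th`), `T₁` the index set
of the `t` largest-magnitude entries of `h₋ₘₐₓ₍ₛ₎`, and `T₀₁ = Th ∪ T₁`.  If `A` satisfies the
(ℓ₂,ℓ₁)-RIP bounds `(1 − δ_{t+s}^{lb})‖v‖₂ ≤ ‖Av‖₁` for all `(t+s)`-sparse `v` and
`‖Av‖₁ ≤ (1 + δ_t^{ub})‖v‖₂` for all `t`-sparse `v` then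
`‖Ah‖₁ ≥ ρ_t ‖h_{T₀₁}‖₂ − 2(1 + δ_t^{ub})‖x₋ₘₐₓ₍ₛ₎‖₁/(√t − α)` where
`ρ_t = 1 − δ_{t+s}^{lb} − (1 + δ_t^{ub})/a(s,t;α)` and `a(s,t;α) = (√t − α)/(√s + α)`. -/
theorem stmt4 {n m : ℕ} (α : ℝ) (hα0 : 0 < α) (hα1 : α ≤ 1)
    (s t : ℕ) (hs : 0 < s) (ht : 0 < t) (hαt : α < Real.sqrt t)
    (x xhat : Fin n → ℝ)
    (hmin : l1norm xhat - α * l2norm xhat ≤ l1norm x - α * l2norm x)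
    (h : Fin n → ℝ) (hh : h = xhat - x)
    (Th Tx : Finset (Fin n)) (hTh : IsMaxIdx h s Th) (hTx : IsMaxIdx x s Tx)
    (T1 : Finset (Fin n)) (hT1 : IsMaxIdxOn (restr h Thᶜ) t T1 Thᶜ)
    (A : Matrix (Fin m) (Fin n) ℝ) (δlb δub : ℝ) (hδlb : 0 ≤ δlb) (hδub : 0 ≤ δub)
    (hRIPlb : ∀ v : Fin n → ℝ, Sparse (t + s) v →
      (1 - δlb) * l2norm v ≤ l1norm (A.mulVec v))
    (hRIPub : ∀ v : Fin n → ℝ, Sparse t v →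
      l1norm (A.mulVec v) ≤ (1 + δub) * l2norm v)
    (a ρ : ℝ) (ha : a = (Real.sqrt t - α) / (Real.sqrt s + α))
    (hρ : ρ = 1 - δlb - (1 + δub) / a) :
    ρ * l2norm (restr h (Th ∪ T1)) -
        2 * (1 + δub) * l1norm (restr x Txᶜ) / (Real.sqrt t - α) ≤
      l1norm (A.mulVec h) :=
  stmt4_general α hα0 s t hαt x xhat hmin h hh Th Tx hTh hTx T1 hT1 A δlb δub hδub hRIPlb hRIPub a ρ
    ha hρ
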